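/- arXiv:1707.00763 — 3 statements merged into one kernel-verified Lean document; each statement's English description precedes it below -/
import Mathlib

section
/- (Proposition 2.) For all real α, β > 0 and μ_z ∈ ℝ, the pushforward of the Z-distribution Z(α, β, μ_z, 1) on ℝ under the map η ↦ 1/(1 + e^{η}) equals the three-parameter Beta distribution TPB(β, α, exp(μ_z)) on (0, 1). -/
open Real MeasureTheory

/-- The Beta function `B(a, b) = Γ(a) Γ(b) / Γ(a + b)`. -/
noncomputable def realBeta (a b : ℝ) : ℝ := Real.Gamma a * Real.Gamma b / Real.Gamma (a + b)

/-- The `Z`-distribution `Z(α, β, μ, 1)`: the measure on `ℝ` with Lebesgue density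
`z ↦ [B(α, β)]⁻¹ [exp(z−μ)]^α [1 + exp(z−μ)]^{−(α+β)}`. -/
noncomputable def zMeasure (α β μz : ℝ) : Measure ℝ :=
  volume.withDensity
    (fun z => ENNReal.ofReal
      ((realBeta α β)⁻¹ * Real.exp (z - μz) ^ α * (1 + Real.exp (z - μz)) ^ (-(α + β))))

/-- The three-parameter Beta distribution `TPB(β, α, γ)`: the measure on `(0, 1)` with Lebesgue
density `κ ↦ [B(β, α)]⁻¹ γ^β κ^{β−1} (1−κ)^{α−1} [1 + (γ−1)κ]^{−(α+β)}`. -/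
noncomputable def tpbMeasure (β α γ : ℝ) : Measure ℝ :=
  (volume.restrict (Set.Ioo (0:ℝ) 1)).withDensity
    (fun κ => ENNReal.ofReal
      ((realBeta β α)⁻¹ * γ ^ β * κ ^ (β - 1) * (1 - κ) ^ (α - 1)
        * (1 + (γ - 1) * κ) ^ (-(α + β))))

/-!
The map `g η = 1 / (1 + e^η)` is a bijection from `ℝ` onto `(0, 1)` with inverse
`ψ κ = log ((1 - κ) / κ)`, and `|ψ' κ| = 1 / (κ (1 - κ))`. By the one-dimensional change of
variables, `g` pushes the `Z`-density `f` forward to `κ ↦ |ψ' κ| f (ψ κ)` on `(0, 1)`. Writing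
`γ = e^μ`, we have `exp (ψ κ - μ) = (1 - κ) / (κ γ)` and
`1 + (1 - κ) / (κ γ) = (1 + (γ - 1) κ) / (κ γ)`, so the powers of `κ γ` collect into
`(κ γ)^β = γ^β κ^β` and, with `B(α, β) = B(β, α)`, this is the `TPB(β, α, γ)` density.
-/

theorem map_withDensity_eq_withDensity_of_leftInverse {g ψ ψ' : ℝ → ℝ} {s : Set ℝ}
    (hs : MeasurableSet s) (hg : Measurable g) (hgs : ∀ x, g x ∈ s)
    (hψg : Function.LeftInverse ψ g) (hgψ : Set.LeftInvOn g ψ s)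
    (hψ : ∀ y ∈ s, HasDerivWithinAt ψ (ψ' y) s y) (f : ℝ → ENNReal) :
    (volume.withDensity f).map g
      = (volume.restrict s).withDensity (fun y => ENNReal.ofReal |ψ' y| * f (ψ y)) := by
  ext t ht
  have hpreimage : g ⁻¹' t = ψ '' (t ∩ s) := by
    ext x
    refine ⟨fun hx => ⟨g x, ⟨hx, hgs x⟩, hψg x⟩, ?_⟩
    rintro ⟨y, ⟨hyt, hys⟩, rfl⟩
    simpa [Set.mem_preimage, hgψ hys] using hyt
  rw [Measure.map_apply hg ht, withDensity_apply _ (hg ht), withDensity_apply _ ht,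
    Measure.restrict_restrict ht, hpreimage,
    lintegral_image_eq_lintegral_abs_deriv_mul (ht.inter hs)
      (fun y hy => (hψ y hy.2).mono Set.inter_subset_right)
      (hgψ.injOn.mono Set.inter_subset_right)]

theorem one_div_one_add_exp_mem_Ioo (x : ℝ) : 1 / (1 + exp x) ∈ Set.Ioo (0 : ℝ) 1 :=
  ⟨by positivity, by rw [div_lt_one (by positivity)]; linarith [exp_pos x]⟩

theorem log_one_sub_div_one_div_one_add_exp (x : ℝ) :
    log ((1 - 1 / (1 + exp x)) / (1 / (1 + exp x))) = x := by
  have hpos : 0 < 1 + exp x := by positivity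
  rw [show (1 - 1 / (1 + exp x)) / (1 / (1 + exp x)) = exp x by field_simp; ring, log_exp]

theorem one_div_one_add_exp_log_one_sub_div {y : ℝ} (hy : y ∈ Set.Ioo (0 : ℝ) 1) :
    1 / (1 + exp (log ((1 - y) / y))) = y := by
  obtain ⟨h0, h1⟩ := hy
  rw [exp_log (div_pos (by linarith) h0)]
  field_simp
  ring

theorem hasDerivAt_log_one_sub_div {y : ℝ} (h0 : y ≠ 0) (h1 : y ≠ 1) :
    HasDerivAt (fun x => log ((1 - x) / x)) (-(1 / (y * (1 - y)))) y := by
  have h1' : 1 - y ≠ 0 := sub_ne_zero.mpr h1.symm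
  have hq : HasDerivAt (fun x => (1 - x) / x) ((-1 * y - (1 - y) * 1) / y ^ 2) y :=
    ((hasDerivAt_id y).const_sub 1).div (hasDerivAt_id y) h0
  convert hq.log (div_ne_zero h1' h0) using 1
  field_simp
  ring

theorem exp_log_one_sub_div_sub {y : ℝ} (hy : y ∈ Set.Ioo (0 : ℝ) 1) (μ : ℝ) :
    exp (log ((1 - y) / y) - μ) = (1 - y) / (y * exp μ) := by
  rw [exp_sub, exp_log (div_pos (by linarith [hy.2]) hy.1), div_div]

theorem realBeta_comm (a b : ℝ) : realBeta a b = realBeta b a := by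
  rw [realBeta, realBeta, mul_comm, add_comm]

theorem one_div_mul_rpow_mul_one_add_rpow {y γ : ℝ} (hy : y ∈ Set.Ioo (0 : ℝ) 1) (hγ : 0 < γ)
    (a b : ℝ) :
    1 / (y * (1 - y)) * (((1 - y) / (y * γ)) ^ a * (1 + (1 - y) / (y * γ)) ^ (-(a + b)))
      = γ ^ b * y ^ (b - 1) * (1 - y) ^ (a - 1) * (1 + (γ - 1) * y) ^ (-(a + b)) := by
  obtain ⟨h0, h1⟩ := hy
  have h1' : 0 < 1 - y := by linarith
  have hc : 0 < y * γ := by positivity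
  have hD : 0 < 1 + (γ - 1) * y := by nlinarith
  rw [show 1 + (1 - y) / (y * γ) = (1 + (γ - 1) * y) / (y * γ) by field_simp; ring,
    div_rpow h1'.le hc.le, div_rpow hD.le hc.le, rpow_neg hc.le, rpow_add hc,
    rpow_sub_one h0.ne', rpow_sub_one h1'.ne', mul_rpow h0.le hγ.le (z := b)]
  field_simp

theorem abs_deriv_mul_zDensity_eq_tpbDensity (α β μ : ℝ) {y : ℝ} (hy : y ∈ Set.Ioo (0 : ℝ) 1) :
    |-(1 / (y * (1 - y)))|
        * ((realBeta α β)⁻¹ * exp (log ((1 - y) / y) - μ) ^ α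
          * (1 + exp (log ((1 - y) / y) - μ)) ^ (-(α + β)))
      = (realBeta β α)⁻¹ * exp μ ^ β * y ^ (β - 1) * (1 - y) ^ (α - 1)
          * (1 + (exp μ - 1) * y) ^ (-(α + β)) := by
  have hpos : 0 < 1 / (y * (1 - y)) := one_div_pos.mpr (mul_pos hy.1 (by linarith [hy.2]))
  rw [abs_neg, abs_of_pos hpos, exp_log_one_sub_div_sub hy, realBeta_comm]
  linear_combination (realBeta β α)⁻¹ * one_div_mul_rpow_mul_one_add_rpow hy (exp_pos μ) α β

theorem z_map_eq_tpb_general (α β μz : ℝ) :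
    Measure.map (fun η : ℝ => 1 / (1 + Real.exp η)) (zMeasure α β μz)
      = tpbMeasure β α (Real.exp μz) := by
  rw [zMeasure, tpbMeasure, map_withDensity_eq_withDensity_of_leftInverse
    (ψ := fun y => log ((1 - y) / y)) measurableSet_Ioo (by fun_prop) one_div_one_add_exp_mem_Ioo
    log_one_sub_div_one_div_one_add_exp (fun _ => one_div_one_add_exp_log_one_sub_div)
    (fun y hy => (hasDerivAt_log_one_sub_div hy.1.ne' hy.2.ne).hasDerivWithinAt)]
  refine withDensity_congr_ae ((ae_restrict_mem measurableSet_Ioo).mono fun y hy => ?_)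
  dsimp only
  rw [← ENNReal.ofReal_mul (abs_nonneg _), abs_deriv_mul_zDensity_eq_tpbDensity α β μz hy]

/-- Proposition 2: for all `α, β > 0` and `μ_z ∈ ℝ`, the pushforward of `Z(α, β, μ_z, 1)` under
`η ↦ 1/(1 + e^{η})` is `TPB(β, α, exp(μ_z))`. -/
theorem z_map_eq_tpb (α β μz : ℝ) (hα : 0 < α) (hβ : 0 < β) :
    Measure.map (fun η : ℝ => 1 / (1 + Real.exp η)) (zMeasure α β μz)
      = tpbMeasure β α (Real.exp μz) :=
  z_map_eq_tpb_general α β μz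
end

section
/- For all real γ > 1 and ε ∈ (0, 1), ∫_ε^1 π⁻¹ γ^{1/2} κ^{−1/2} (1−κ)^{−1/2} [1 + (γ−1)κ]⁻¹ dκ ≤ (2/π) ε^{−1/2} (1 − ε)^{1/2} γ^{1/2} / [1 + (γ−1)ε]. In particular, the TPB(1/2, 1/2, γ) probability of the interval (ε, 1) is bounded above by (2/π) ε^{−1/2} (1 − ε)^{1/2} γ^{1/2} / [1 + (γ−1)ε]. -/
/-!
On `(ε, 1)` the factor `κ^{-1/2} [1 + (γ-1)κ]⁻¹` is decreasing, so it is at most its value at `ε`;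
what remains is `∫_ε^1 (1-κ)^{-1/2} dκ = 2 (1-ε)^{1/2}`.
-/

open Real MeasureTheory Set

lemma antitoneOn_rpow_mul_inv_one_add_mul {r c : ℝ} (hr : r ≤ 0) (hc : 0 ≤ c) :
    AntitoneOn (fun x : ℝ => x ^ r * (1 + c * x)⁻¹) (Ioi 0) := by
  rintro x (hx : 0 < x) y (hy : 0 < y) hxy
  exact mul_le_mul (rpow_le_rpow_of_nonpos hx hxy hr)
    (inv_anti₀ (by positivity) (by gcongr)) (by positivity) (by positivity)

lemma integrableOn_Ioo_sub_rpow {a b r : ℝ} (hr : -1 < r) :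
    IntegrableOn (fun x : ℝ => (b - x) ^ r) (Ioo a b) := by
  rcases le_or_gt a b with hab | hab
  · have h := (intervalIntegral.intervalIntegrable_rpow' (a := 0) (b := b - a) hr).comp_sub_left b
    simp only [sub_zero, sub_sub_cancel] at h
    exact h.symm.1.mono_set Ioo_subset_Ioc_self
  · simp [Ioo_eq_empty_of_le hab.le]

lemma integral_Ioo_sub_rpow {a b r : ℝ} (hab : a ≤ b) (hr : -1 < r) :
    ∫ x in Ioo a b, (b - x) ^ r = (b - a) ^ (r + 1) / (r + 1) := by
  rw [← integral_Ioc_eq_integral_Ioo, ← intervalIntegral.integral_of_le hab,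
    intervalIntegral.integral_comp_sub_left (fun x : ℝ => x ^ r) b,
    integral_rpow (Or.inl hr), sub_self, zero_rpow (by linarith), sub_zero]

/-- Key estimate of Theorem 2: for all `γ > 1` and `ε ∈ (0, 1)`,
`∫_ε^1 π⁻¹ γ^{1/2} κ^{−1/2} (1−κ)^{−1/2} [1 + (γ−1)κ]⁻¹ dκ
  ≤ (2/π) ε^{−1/2} (1 − ε)^{1/2} γ^{1/2} / [1 + (γ−1)ε]`,
i.e. the `TPB(1/2, 1/2, γ)` probability of `(ε, 1)` is bounded by the right-hand side. -/
theorem tpb_half_tail_bound (γ ε : ℝ) (hγ : 1 < γ) (hε : ε ∈ Set.Ioo (0:ℝ) 1) :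
    (∫ κ in Set.Ioo ε 1,
        π⁻¹ * γ ^ ((1:ℝ)/2) * κ ^ (-(1:ℝ)/2) * (1 - κ) ^ (-(1:ℝ)/2)
          * (1 + (γ - 1) * κ)⁻¹)
      ≤ (2 / π) * ε ^ (-(1:ℝ)/2) * (1 - ε) ^ ((1:ℝ)/2) * γ ^ ((1:ℝ)/2)
          / (1 + (γ - 1) * ε) := by
  obtain ⟨hε0, hε1⟩ := hε
  set C := π⁻¹ * γ ^ ((1:ℝ)/2) * (ε ^ (-(1:ℝ)/2) * (1 + (γ - 1) * ε)⁻¹)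
  have hdecr := antitoneOn_rpow_mul_inv_one_add_mul (r := -(1:ℝ)/2) (by norm_num)
    (sub_pos.mpr hγ).le
  have hbound : ∀ᵐ κ ∂volume.restrict (Ioo ε 1),
      π⁻¹ * γ ^ ((1:ℝ)/2) * κ ^ (-(1:ℝ)/2) * (1 - κ) ^ (-(1:ℝ)/2) * (1 + (γ - 1) * κ)⁻¹
        ≤ C * (1 - κ) ^ (-(1:ℝ)/2) := by
    filter_upwards [ae_restrict_mem measurableSet_Ioo] with κ hκ
    have hκ0 : 0 < κ := hε0.trans hκ.1
    have h1κ : 0 < 1 - κ := sub_pos.2 hκ.2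
    have hle := hdecr (mem_Ioi.2 hε0) (mem_Ioi.2 hκ0) hκ.1.le
    calc _ = π⁻¹ * γ ^ ((1:ℝ)/2) * (κ ^ (-(1:ℝ)/2) * (1 + (γ - 1) * κ)⁻¹)
          * (1 - κ) ^ (-(1:ℝ)/2) := by ring
      _ ≤ C * (1 - κ) ^ (-(1:ℝ)/2) :=
          mul_le_mul_of_nonneg_right (mul_le_mul_of_nonneg_left hle (by positivity))
            (by positivity)
  have hnonneg : ∀ᵐ κ ∂volume.restrict (Ioo ε 1),
      0 ≤ π⁻¹ * γ ^ ((1:ℝ)/2) * κ ^ (-(1:ℝ)/2) * (1 - κ) ^ (-(1:ℝ)/2)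
        * (1 + (γ - 1) * κ)⁻¹ := by
    filter_upwards [ae_restrict_mem measurableSet_Ioo] with κ hκ
    have hκ0 : 0 < κ := hε0.trans hκ.1
    have h1κ : 0 < 1 - κ := sub_pos.2 hκ.2
    have : 0 < 1 + (γ - 1) * κ := by nlinarith
    positivity
  calc _ ≤ ∫ κ in Ioo ε 1, C * (1 - κ) ^ (-(1:ℝ)/2) :=
        integral_mono_of_nonneg hnonneg
          ((integrableOn_Ioo_sub_rpow (by norm_num)).const_mul C) hbound
    _ = C * ((1 - ε) ^ ((1:ℝ)/2) / (1/2)) := by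
        rw [integral_const_mul, integral_Ioo_sub_rpow hε1.le (by norm_num)]
        norm_num
    _ = _ := by ring
end

section
/- (Theorem 3(b).) For y ∈ ℝ and γ > 0 define g_{y,γ}(κ) = (1−κ)^{−1/2} [1 + (γ−1)κ]⁻¹ exp(−y²κ/2) for κ ∈ (0, 1). Then for every fixed γ ∈ (0, 1) and ε ∈ (0, 1), ∫_ε^1 g_{y,γ}(κ) dκ / ∫₀¹ g_{y,γ}(κ) dκ → 0 as |y| → ∞. Equivalently, the normalized posterior probability that κ < ε tends to 1 as |y| → ∞. -/
/-!
Write `g_{y,γ}(κ) = w(κ) e^{-tκ}` with `t = y²/2` and `w(κ) = (1-κ)^{-1/2} [1 + (γ-1)κ]⁻¹`.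
For `γ ∈ (0,1)` the weight `w` is integrable on `(0,1)` and bounded below by `1`. For such a
weight the mass beyond `ε` is at most `e^{-tε} ∫ w`, while the total mass is at least
`(ε/2) e^{-tε/2}` (from `(0, ε/2)` alone), so the ratio is `O(e^{-tε/2}) → 0` as `t → ∞`.
-/

open Real MeasureTheory Filter

/-- The unnormalized posterior density of the shrinkage parameter `κ` under the conditional
`TPB(1/2, 1/2, γ)` prior and the marginal likelihood `[y | κ] ~ N(0, κ⁻¹)`:
`g_{y,γ}(κ) = (1−κ)^{−1/2} [1 + (γ−1)κ]⁻¹ exp(−y²κ/2)`. -/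
noncomputable def gPost (y γ κ : ℝ) : ℝ :=
  (1 - κ) ^ (-(1:ℝ)/2) * (1 + (γ - 1) * κ)⁻¹ * Real.exp (-y ^ 2 * κ / 2)

open Set Topology

section Laplace

variable {w : ℝ → ℝ} {a b c t : ℝ}

lemma integrableOn_Ioo_mul_exp_neg_mul (hw : IntegrableOn w (Ioo a b)) (t : ℝ) :
    IntegrableOn (fun κ => w κ * exp (-t * κ)) (Ioo a b) :=
  hw.mul_continuousOn_of_subset (by fun_prop) measurableSet_Ioo isCompact_Icc
    Ioo_subset_Icc_self

lemma setIntegral_Ioo_mul_exp_neg_mul_le (hw : IntegrableOn w (Ioo a b))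
    (hw_nonneg : ∀ κ ∈ Ioo a b, 0 ≤ w κ) (ht : 0 ≤ t) :
    ∫ κ in Ioo a b, w κ * exp (-t * κ) ≤ (∫ κ in Ioo a b, w κ) * exp (-t * a) := by
  rw [← integral_mul_const]
  refine setIntegral_mono_on (integrableOn_Ioo_mul_exp_neg_mul hw t) (hw.mul_const _)
    measurableSet_Ioo fun κ hκ => ?_
  exact mul_le_mul_of_nonneg_left (exp_le_exp.2 (by nlinarith [hκ.1])) (hw_nonneg κ hκ)

lemma mul_exp_neg_mul_le_setIntegral_Ioo (hw : IntegrableOn w (Ioo 0 b)) (hc : 0 ≤ c)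
    (hw_ge : ∀ κ ∈ Ioo 0 b, c ≤ w κ) {δ : ℝ} (hδ : δ ∈ Ioc 0 b) (ht : 0 ≤ t) :
    c * δ * exp (-t * δ) ≤ ∫ κ in Ioo 0 b, w κ * exp (-t * κ) := by
  have hsub : Ioo 0 δ ⊆ Ioo 0 b := Ioo_subset_Ioo_right hδ.2
  have hw_nonneg : ∀ κ ∈ Ioo 0 b, 0 ≤ w κ := fun κ hκ => hc.trans (hw_ge κ hκ)
  calc c * δ * exp (-t * δ) = ∫ _ in Ioo 0 δ, c * exp (-t * δ) := by
        rw [setIntegral_const, volume_real_Ioo_of_le hδ.1.le, smul_eq_mul]; ring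
    _ ≤ ∫ κ in Ioo 0 δ, w κ * exp (-t * κ) := by
        refine setIntegral_mono_on (integrableOn_const measure_Ioo_lt_top.ne)
          ((integrableOn_Ioo_mul_exp_neg_mul hw t).mono_set hsub) measurableSet_Ioo
          fun κ hκ => ?_
        exact mul_le_mul (hw_ge κ (hsub hκ)) (exp_le_exp.2 (by nlinarith [hκ.2]))
          (exp_nonneg _) (hw_nonneg κ (hsub hκ))
    _ ≤ ∫ κ in Ioo 0 b, w κ * exp (-t * κ) := by
        refine setIntegral_mono_set (integrableOn_Ioo_mul_exp_neg_mul hw t) ?_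
          hsub.eventuallyLE
        filter_upwards [ae_restrict_mem measurableSet_Ioo] with κ hκ
        exact mul_nonneg (hw_nonneg κ hκ) (exp_nonneg _)

theorem tendsto_setIntegral_Ioo_mul_exp_neg_mul_div_atTop (hw : IntegrableOn w (Ioo 0 b))
    (hc : 0 < c) (hw_ge : ∀ κ ∈ Ioo 0 b, c ≤ w κ) {ε : ℝ} (hε : ε ∈ Ioo 0 b) :
    Tendsto (fun t => (∫ κ in Ioo ε b, w κ * exp (-t * κ)) /
      ∫ κ in Ioo 0 b, w κ * exp (-t * κ)) atTop (𝓝 0) := by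
  have hsub : Ioo ε b ⊆ Ioo 0 b := Ioo_subset_Ioo_left hε.1.le
  have hw_nonneg : ∀ κ ∈ Ioo 0 b, 0 ≤ w κ := fun κ hκ => hc.le.trans (hw_ge κ hκ)
  set M := ∫ κ in Ioo ε b, w κ
  have hM : 0 ≤ M := setIntegral_nonneg measurableSet_Ioo fun κ hκ => hw_nonneg κ (hsub hκ)
  have hbound : ∀ t, 0 ≤ t → (∫ κ in Ioo ε b, w κ * exp (-t * κ)) /
      (∫ κ in Ioo 0 b, w κ * exp (-t * κ)) ≤ M / (c * (ε / 2)) * exp (-(t * (ε / 2))) := by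
    intro t ht
    have hden := mul_exp_neg_mul_le_setIntegral_Ioo hw hc.le hw_ge
      (δ := ε / 2) ⟨by linarith [hε.1], by linarith [hε.1, hε.2]⟩ ht
    have hnum := setIntegral_Ioo_mul_exp_neg_mul_le (hw.mono_set hsub)
      (fun κ hκ => hw_nonneg κ (hsub hκ)) ht
    calc _ ≤ M * exp (-t * ε) / (c * (ε / 2) * exp (-t * (ε / 2))) :=
          div_le_div₀ (by positivity) hnum (by have := hε.1; positivity) hden
      _ = M / (c * (ε / 2)) * exp (-(t * (ε / 2))) := by
          rw [mul_div_mul_comm, ← exp_sub]; ring_nf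
  have hnonneg : ∀ t, 0 ≤ (∫ κ in Ioo ε b, w κ * exp (-t * κ)) /
      ∫ κ in Ioo 0 b, w κ * exp (-t * κ) := fun t =>
    div_nonneg
      (setIntegral_nonneg measurableSet_Ioo fun κ hκ =>
        mul_nonneg (hw_nonneg κ (hsub hκ)) (exp_nonneg _))
      (setIntegral_nonneg measurableSet_Ioo fun κ hκ =>
        mul_nonneg (hw_nonneg κ hκ) (exp_nonneg _))
  have hexp : Tendsto (fun t => M / (c * (ε / 2)) * exp (-(t * (ε / 2)))) atTop (𝓝 0) := by
    simpa using (tendsto_exp_neg_atTop_nhds_zero.comp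
      (tendsto_id.atTop_mul_const (by linarith [hε.1] : 0 < ε / 2))).const_mul
      (M / (c * (ε / 2)))
  exact squeeze_zero' (Eventually.of_forall hnonneg)
    (eventually_ge_atTop 0 |>.mono hbound) hexp

end Laplace

lemma integrableOn_one_sub_rpow_Ioo {r : ℝ} (hr : -1 < r) :
    IntegrableOn (fun x : ℝ => (1 - x) ^ r) (Ioo 0 1) := by
  have h := (intervalIntegral.intervalIntegrable_rpow' hr (a := 0) (b := 1)).comp_sub_left 1
  simp only [sub_zero, sub_self] at h
  exact ((intervalIntegrable_iff_integrableOn_Ioc_of_le zero_le_one).mp h.symm).mono_set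
    Ioo_subset_Ioc_self

noncomputable def shrinkageWeight (γ κ : ℝ) : ℝ :=
  (1 - κ) ^ (-(1:ℝ)/2) * (1 + (γ - 1) * κ)⁻¹

lemma gPost_eq_shrinkageWeight_mul (y γ κ : ℝ) :
    gPost y γ κ = shrinkageWeight γ κ * exp (-(y ^ 2 / 2) * κ) := by
  rw [gPost, shrinkageWeight]; ring_nf

section ShrinkageWeight

variable {γ κ : ℝ}

/-- `1 + (γ - 1) κ = (1 - κ) + γ κ` is a convex combination of `1` and `γ`. -/
lemma min_le_one_add_sub_one_mul (hκ : κ ∈ Icc (0:ℝ) 1) : min γ 1 ≤ 1 + (γ - 1) * κ := by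
  nlinarith [mul_nonneg (sub_nonneg.2 hκ.2) (sub_nonneg.2 (min_le_right γ 1)),
    mul_nonneg hκ.1 (sub_nonneg.2 (min_le_left γ 1))]

lemma one_le_shrinkageWeight (hγ₀ : 0 ≤ γ) (hγ₁ : γ ≤ 1) (hκ : κ ∈ Ioo (0:ℝ) 1) :
    1 ≤ shrinkageWeight γ κ := by
  have hden : 0 < 1 + (γ - 1) * κ := by nlinarith [hκ.1, hκ.2]
  have hrpow : 1 ≤ (1 - κ) ^ (-(1:ℝ)/2) :=
    one_le_rpow_of_pos_of_le_one_of_nonpos (by linarith [hκ.2]) (by linarith [hκ.1])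
      (by norm_num)
  have hinv : 1 ≤ (1 + (γ - 1) * κ)⁻¹ := (one_le_inv₀ hden).2 (by nlinarith [hκ.1])
  simpa [shrinkageWeight] using mul_le_mul hrpow hinv zero_le_one (zero_le_one.trans hrpow)

lemma integrableOn_shrinkageWeight (hγ : 0 < γ) :
    IntegrableOn (shrinkageWeight γ) (Ioo 0 1) := by
  refine ((integrableOn_one_sub_rpow_Ioo (by norm_num : -1 < -(1:ℝ)/2)).mul_const
    (min γ 1)⁻¹).mono' (by unfold shrinkageWeight; fun_prop) ?_
  filter_upwards [ae_restrict_mem measurableSet_Ioo] with κ hκ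
  have hmin : 0 < min γ 1 := lt_min hγ one_pos
  have hden := min_le_one_add_sub_one_mul (γ := γ) (Ioo_subset_Icc_self hκ)
  have hrpow : 0 ≤ (1 - κ) ^ (-(1:ℝ)/2) := rpow_nonneg (by linarith [hκ.2]) _
  rw [shrinkageWeight, norm_mul, norm_of_nonneg hrpow, norm_inv,
    norm_of_nonneg (hmin.le.trans hden)]
  exact mul_le_mul_of_nonneg_left (inv_anti₀ hmin hden) hrpow

end ShrinkageWeight

lemma tendsto_sq_div_two_cocompact : Tendsto (fun y : ℝ => y ^ 2 / 2) (cocompact ℝ) atTop := by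
  have h := (tendsto_pow_atTop two_ne_zero).comp (tendsto_norm_cocompact_atTop (E := ℝ))
  simp only [Function.comp_def, norm_eq_abs, sq_abs] at h
  exact h.atTop_div_const two_pos

/-- Theorem 3(b): for every fixed `γ ∈ (0, 1)` and `ε ∈ (0, 1)`,
`∫_ε^1 g_{y,γ}(κ) dκ / ∫₀¹ g_{y,γ}(κ) dκ → 0` as `|y| → ∞`; equivalently, the normalized
posterior probability that `κ < ε` tends to `1` as `|y| → ∞`. -/
theorem dhs_posterior_robustness (γ ε : ℝ) (hγ : γ ∈ Set.Ioo (0:ℝ) 1)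
    (hε : ε ∈ Set.Ioo (0:ℝ) 1) :
    Tendsto (fun y : ℝ =>
        (∫ κ in Set.Ioo ε 1, gPost y γ κ) / (∫ κ in Set.Ioo (0:ℝ) 1, gPost y γ κ))
      (Filter.cocompact ℝ) (nhds 0) := by
  simp_rw [gPost_eq_shrinkageWeight_mul]
  exact (tendsto_setIntegral_Ioo_mul_exp_neg_mul_div_atTop (integrableOn_shrinkageWeight hγ.1)
    one_pos (fun κ hκ => one_le_shrinkageWeight hγ.1.le hγ.2.le hκ) hε).comp
    tendsto_sq_div_two_cocompact
end
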